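/- Generating-polynomial formula for the (r,s)-Lah distribution: for all n ∈ ℕ, k ∈ {0,…,n}, reals r, s ≥ 0 and any t, Σ_{j=k}^n S1_r(n,j) S2_s(j,k) t^j equals (n!/k!) times the coefficient of x^n in ((1−x)^{−t} − 1)^k (1−x)^{−(st+r)}. -/

import Mathlib

open Polynomial Finset PowerSeries

/-- The `r`-Stirling number of the first kind, defined as `(1/k!)` times the `k`-th
derivative in `r` of the rising factorial `r^{n↑}`. -/
noncomputable def S1r (r : ℝ) (n k : ℕ) : ℝ :=
  (1 / (k.factorial : ℝ)) * deriv^[k] (fun x : ℝ => (ascPochhammer ℝ n).eval x) r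

/-- The forward finite difference operator `(Δ f)(r) = f (r+1) - f r`. -/
def fdiff (f : ℝ → ℝ) : ℝ → ℝ := fun r => f (r + 1) - f r

/-- The `r`-Stirling number of the second kind, `(1/k!) Δ^k (r^n)`. -/
noncomputable def S2r (r : ℝ) (n k : ℕ) : ℝ :=
  (1 / (k.factorial : ℝ)) * (fdiff^[k] (fun x : ℝ => x ^ n)) r

/-- The formal power series `(1-x)^{-t}` for real `t`, with coefficients `t^{b↑}/b!`. -/
noncomputable def invOneSub (t : ℝ) : PowerSeries ℝ :=
  PowerSeries.mk fun b => (ascPochhammer ℝ b).eval t / (b.factorial : ℝ)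

/-!
Both sides are alternating sums over `i ≤ k`. On the left, `S2_s(j,k) = (1/k!) Δ^k x^j |_{x=s}`
is an explicit alternating sum of `(s+i)^j`, and the `S1_r(n,j)` are the Taylor coefficients of the
rising factorial at `r`, so summing over `j` gives `(1/k!) Σ_i (-1)^(k-i) C(k,i) (r+(s+i)t)^{n↑}`.
On the right, `(1-x)^{-t}` is Mathlib's binomial series `(1+X)^{-t}` at `-x`, so
`(1-x)^{-a} (1-x)^{-b} = (1-x)^{-(a+b)}`; the binomial expansion of `((1-x)^{-t} - 1)^k` then turns
the right side into the same alternating sum of the `n`-th coefficients of `(1-x)^{-((s+i)t+r)}`.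
-/

theorem Polynomial.iterate_deriv_eval {𝕜 : Type*} [NontriviallyNormedField 𝕜] (p : 𝕜[X])
    (k : ℕ) : deriv^[k] (fun x => p.eval x) = fun x => (derivative^[k] p).eval x := by
  induction k generalizing p with
  | zero => rfl
  | succ k ih =>
    have hderiv : _root_.deriv (fun x => p.eval x) = fun x => p.derivative.eval x := by
      ext x; exact p.deriv
    rw [Function.iterate_succ_apply, Function.iterate_succ_apply, hderiv, ih]

theorem S1r_eq_coeff_taylor (r : ℝ) (n j : ℕ) :
    S1r r n j = (taylor r (ascPochhammer ℝ n)).coeff j := by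
  rw [S1r, taylor_coeff, iterate_deriv_eval, ← factorial_smul_hasseDeriv, LinearMap.smul_apply]
  dsimp only
  rw [eval_smul, nsmul_eq_mul, one_div_mul_eq_div,
    mul_div_cancel_left₀ _ (Nat.cast_ne_zero.mpr j.factorial_ne_zero)]

theorem sum_S1r_mul_pow (r u : ℝ) (n : ℕ) :
    ∑ j ∈ range (n + 1), S1r r n j * u ^ j = (ascPochhammer ℝ n).eval (u + r) := by
  have hdeg : (taylor r (ascPochhammer ℝ n)).natDegree < n + 1 := by
    rw [natDegree_taylor, ascPochhammer_natDegree]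
    exact n.lt_succ_self
  simp only [S1r_eq_coeff_taylor, ← taylor_eval, eval_eq_sum_range' hdeg]

theorem S2r_eq_sum (s : ℝ) (j k : ℕ) :
    S2r s j k = (k.factorial : ℝ)⁻¹ *
      ∑ i ∈ range (k + 1), (-1 : ℝ) ^ (k - i) * k.choose i * (s + i) ^ j := by
  rw [S2r, one_div, show fdiff = fwdDiff 1 from rfl, fwdDiff_iter_eq_sum_shift]
  congr 1
  refine sum_congr rfl fun i _ => ?_
  rw [zsmul_eq_mul, nsmul_one]
  push_cast
  ring

theorem S2r_eq_zero_of_lt (s : ℝ) {j k : ℕ} (h : j < k) : S2r s j k = 0 := by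
  rw [S2r, show fdiff = fwdDiff 1 from rfl, fwdDiff_iter_pow_eq_zero_of_lt h, Pi.zero_apply,
    mul_zero]

theorem sum_S1r_mul_S2r_mul_pow (r s t : ℝ) (n k : ℕ) :
    ∑ j ∈ range (n + 1), S1r r n j * S2r s j k * t ^ j =
      (k.factorial : ℝ)⁻¹ * ∑ i ∈ range (k + 1),
        (-1 : ℝ) ^ (k - i) * k.choose i * (ascPochhammer ℝ n).eval ((s + i) * t + r) := by
  simp_rw [S2r_eq_sum, mul_sum, sum_mul]
  rw [sum_comm]
  refine sum_congr rfl fun i _ => ?_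
  rw [← sum_S1r_mul_pow, mul_sum, mul_sum]
  refine sum_congr rfl fun j _ => ?_
  rw [mul_pow]
  ring

theorem Ring.multichoose_eq_ascPochhammer_div {K : Type*} [Field K] [CharZero K] (a : K)
    (n : ℕ) : Ring.multichoose a n = (ascPochhammer K n).eval a / n.factorial := by
  rw [eq_div_iff (Nat.cast_ne_zero.mpr n.factorial_ne_zero), mul_comm, ← nsmul_eq_mul,
    Ring.factorial_nsmul_multichoose_eq_ascPochhammer, ascPochhammer_smeval_eq_eval]

theorem invOneSub_eq_rescale_binomialSeries (t : ℝ) :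
    invOneSub t = rescale (-1) (binomialSeries ℝ (-t)) := by
  ext m
  rw [invOneSub, coeff_mk, coeff_rescale, binomialSeries_coeff, Ring.choose_neg',
    Ring.multichoose_eq_ascPochhammer_div, Units.smul_def, zsmul_eq_mul,
    Int.cast_negOnePow_natCast, smul_eq_mul, mul_one, ← mul_assoc, ← mul_pow, neg_one_mul,
    neg_neg, one_pow, one_mul]

theorem invOneSub_add (a b : ℝ) : invOneSub (a + b) = invOneSub a * invOneSub b := by
  simp only [invOneSub_eq_rescale_binomialSeries, neg_add, binomialSeries_add, map_mul]

theorem invOneSub_zero : invOneSub 0 = 1 := by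
  simp only [invOneSub_eq_rescale_binomialSeries, neg_zero, binomialSeries_zero, map_one]

theorem invOneSub_nsmul (i : ℕ) (t : ℝ) : invOneSub (i • t) = invOneSub t ^ i := by
  induction i with
  | zero => rw [zero_smul, invOneSub_zero, pow_zero]
  | succ i ih => rw [succ_nsmul, invOneSub_add, ih, pow_succ]

theorem coeff_invOneSub_sub_one_pow_mul (t a : ℝ) (n k : ℕ) :
    coeff n ((invOneSub t - 1) ^ k * invOneSub a) =
      (n.factorial : ℝ)⁻¹ * ∑ i ∈ range (k + 1),
        (-1 : ℝ) ^ (k - i) * k.choose i * (ascPochhammer ℝ n).eval (i * t + a) := by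
  rw [sub_eq_add_neg, add_pow, sum_mul, map_sum, mul_sum]
  refine sum_congr rfl fun i _ => ?_
  have hterm : invOneSub t ^ i * (-1 : ℝ⟦X⟧) ^ (k - i) * (k.choose i : ℝ⟦X⟧) * invOneSub a =
      PowerSeries.C ((-1 : ℝ) ^ (k - i) * k.choose i) * invOneSub (i • t + a) := by
    rw [invOneSub_add, invOneSub_nsmul, map_mul, map_pow, map_neg, map_one, map_natCast]
    ring
  rw [hterm, PowerSeries.coeff_C_mul, invOneSub, coeff_mk, nsmul_eq_mul]
  ring

theorem rs_Lah_generating_polynomial_general (n k : ℕ) (r s : ℝ) (t : ℝ) :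
    ∑ j ∈ Finset.Icc k n, S1r r n j * S2r s j k * t ^ j =
      ((n.factorial : ℝ) / (k.factorial : ℝ)) *
        PowerSeries.coeff n ((invOneSub t - 1) ^ k * invOneSub (s * t + r)) := by
  have hrange : ∑ j ∈ Icc k n, S1r r n j * S2r s j k * t ^ j =
      ∑ j ∈ range (n + 1), S1r r n j * S2r s j k * t ^ j := by
    refine sum_subset (fun j hj => ?_) fun j hj hj' => ?_
    · simp only [mem_Icc, mem_range] at hj ⊢
      omega
    · have hjk : j < k := by
        simp only [mem_Icc, mem_range, not_and, not_le] at hj hj'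
        omega
      rw [S2r_eq_zero_of_lt s hjk, mul_zero, zero_mul]
  have hargs : ∀ i : ℕ, (s + i) * t + r = i * t + (s * t + r) := fun i => by ring
  rw [hrange, sum_S1r_mul_S2r_mul_pow, coeff_invOneSub_sub_one_pow_mul]
  simp_rw [hargs]
  rw [div_mul_eq_mul_div, mul_inv_cancel_left₀ (Nat.cast_ne_zero.mpr n.factorial_ne_zero),
    div_eq_inv_mul]

theorem rs_Lah_generating_polynomial (n k : ℕ) (hn : 1 ≤ n) (hk : k ≤ n)
    (r s : ℝ) (hr : 0 ≤ r) (hs : 0 ≤ s) (t : ℝ) :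
    ∑ j ∈ Finset.Icc k n, S1r r n j * S2r s j k * t ^ j =
      ((n.factorial : ℝ) / (k.factorial : ℝ)) *
        PowerSeries.coeff n ((invOneSub t - 1) ^ k * invOneSub (s * t + r)) :=
  rs_Lah_generating_polynomial_general n k r s t
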